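/- Let F = (N_1^2 + N_2^2 − 2 N_{-1}^2)/√12 where N_{-1}, N_1, N_2 are i.i.d. standard Gaussians. Then E[F] = 0, E[F^2] = 1, E[P_4(F)] = 0 and E[P_8(F)] = 0, yet F is not distributed as the product of two independent standard Gaussians (e.g., its sixth moment differs from 225). -/

import Mathlib

open MeasureTheory ProbabilityTheory

/-- The joint law of two independent standard Gaussians. -/
noncomputable def gauss2 : Measure (ℝ × ℝ) :=
  (gaussianReal 0 1).prod (gaussianReal 0 1)

/-- The joint law of three i.i.d. standard Gaussians (N₋₁, N₁, N₂). -/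
noncomputable def gauss3 : Measure (ℝ × ℝ × ℝ) :=
  (gaussianReal 0 1).prod ((gaussianReal 0 1).prod (gaussianReal 0 1))

/-- F = (N₁² + N₂² - 2N₋₁²)/√12, with q.1 = N₋₁, q.2.1 = N₁, q.2.2 = N₂. -/
noncomputable def chiComb (q : ℝ × ℝ × ℝ) : ℝ :=
  (q.2.1 ^ 2 + q.2.2 ^ 2 - 2 * q.1 ^ 2) / Real.sqrt 12

/-!
Writing `√12 F = -2 N₋₁² + (N₁² + N₂²)` as a sum of two independent terms, the binomial
theorem reduces every moment of `F` to the even Gaussian moments `E[N^(2k)] = (2k - 1)‼`, which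
follow from Stein's identity `E[N^(n+2)] = (n + 1) E[N^n]`. This gives `E[F^2] = 1`,
`E[F^4] = 9`, `E[F^6] = 265` and `E[F^8] = 16625`, hence `E[P₄(F)] = E[P₈(F)] = 0`, while the
product of two independent standard Gaussians has sixth moment `15² = 225`.
-/

open Finset
open scoped NNReal Nat

namespace ProbabilityTheory

lemma integrable_pow_gaussianReal (μ : ℝ) (v : ℝ≥0) (n : ℕ) :
    Integrable (fun x ↦ x ^ n) (gaussianReal μ v) :=
  (memLp_id_gaussianReal n).integrable_norm_pow'.mono' (by fun_prop)
    (ae_of_all _ fun x ↦ by simp [norm_pow])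

lemma integrable_gaussianReal_iff {μ : ℝ} {v : ℝ≥0} (hv : v ≠ 0) {f : ℝ → ℝ} :
    Integrable f (gaussianReal μ v) ↔ Integrable (fun x ↦ gaussianPDFReal μ v x • f x) := by
  rw [gaussianReal_of_var_ne_zero μ hv, integrable_withDensity_iff_integrable_smul'
    (measurable_gaussianPDF μ v) (ae_of_all _ fun _ ↦ gaussianPDF_lt_top)]
  simp only [toReal_gaussianPDF]

lemma hasDerivAt_gaussianPDFReal (μ : ℝ) (v : ℝ≥0) (x : ℝ) :
    HasDerivAt (gaussianPDFReal μ v) (-((x - μ) / v) * gaussianPDFReal μ v x) x := by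
  have h : HasDerivAt (fun y : ℝ ↦ -(y - μ) ^ 2 / (2 * v)) (-(2 * (x - μ)) / (2 * v)) x := by
    simpa using (((hasDerivAt_id' x).sub_const μ).pow 2).neg.div_const (2 * (v : ℝ))
  refine (h.exp.const_mul (√(2 * Real.pi * v))⁻¹).congr_deriv ?_
  rw [gaussianPDFReal]
  ring

/-- Gaussian integration by parts (Stein's identity) applied to `x ↦ x ^ (n + 1)`. -/
lemma integral_pow_add_two_gaussianReal (v : ℝ≥0) (n : ℕ) :
    ∫ x, x ^ (n + 2) ∂gaussianReal 0 v = (n + 1) * v * ∫ x, x ^ n ∂gaussianReal 0 v := by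
  rcases eq_or_ne v 0 with hv | hv
  · simp [hv]
  rw [integral_gaussianReal_eq_integral_smul hv, integral_gaussianReal_eq_integral_smul hv]
  simp only [smul_eq_mul]
  set p := gaussianPDFReal 0 v
  have hint (k : ℕ) : Integrable (fun x ↦ p x * x ^ k) :=
    (integrable_gaussianReal_iff hv).1 (integrable_pow_gaussianReal 0 v k)
  have hderiv (x : ℝ) : HasDerivAt (fun x ↦ p x * x ^ (n + 1))
      ((n + 1) * (p x * x ^ n) - (v : ℝ)⁻¹ * (p x * x ^ (n + 2))) x := by
    refine ((hasDerivAt_gaussianPDFReal 0 v x).mul (hasDerivAt_pow (n + 1) x)).congr_deriv ?_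
    simp only [sub_zero, Nat.cast_add, Nat.cast_one, add_tsub_cancel_right]
    field_simp
    ring
  have h := integral_eq_zero_of_hasDerivAt_of_integrable hderiv
    (((hint n).const_mul _).sub ((hint (n + 2)).const_mul _)) (hint (n + 1))
  rw [integral_sub ((hint n).const_mul _) ((hint (n + 2)).const_mul _), integral_const_mul,
    integral_const_mul, sub_eq_zero] at h
  rw [mul_comm _ (v : ℝ), mul_assoc, h, ← mul_assoc, mul_inv_cancel₀ (by exact_mod_cast hv),
    one_mul]

lemma integral_pow_two_mul_gaussianReal (v : ℝ≥0) (k : ℕ) :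
    ∫ x, x ^ (2 * k) ∂gaussianReal 0 v = v ^ k * (2 * k - 1 : ℕ)‼ := by
  induction k with
  | zero => simp
  | succ k ih =>
    rw [show 2 * (k + 1) = 2 * k + 2 by ring, integral_pow_add_two_gaussianReal, ih,
      show 2 * k + 2 - 1 = 2 * k + 1 by omega, Nat.doubleFactorial_add_one]
    push_cast
    ring

end ProbabilityTheory

section ProdMoments

variable {α β : Type*} [MeasurableSpace α] [MeasurableSpace β] {μ : Measure α} {ν : Measure β}
  {f : α → ℝ} {g : β → ℝ}

lemma integrable_add_pow_prod (hf : ∀ k, Integrable (fun x ↦ f x ^ k) μ)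
    (hg : ∀ k, Integrable (fun y ↦ g y ^ k) ν) (n : ℕ) :
    Integrable (fun z : α × β ↦ (f z.1 + g z.2) ^ n) (μ.prod ν) := by
  simp_rw [add_pow]
  exact integrable_finsetSum _ fun k _ ↦ ((hf k).mul_prod (hg (n - k))).mul_const _

lemma integral_add_pow_prod [SFinite μ] [SFinite ν] (hf : ∀ k, Integrable (fun x ↦ f x ^ k) μ)
    (hg : ∀ k, Integrable (fun y ↦ g y ^ k) ν) (n : ℕ) :
    ∫ z, (f z.1 + g z.2) ^ n ∂μ.prod ν =
      ∑ k ∈ range (n + 1), (∫ x, f x ^ k ∂μ) * (∫ y, g y ^ (n - k) ∂ν) * n.choose k := by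
  simp_rw [add_pow]
  rw [integral_finsetSum _ fun k _ ↦ ((hf k).mul_prod (hg (n - k))).mul_const _]
  refine sum_congr rfl fun k _ ↦ ?_
  rw [integral_mul_const, integral_prod_mul (fun x ↦ f x ^ k) (fun y ↦ g y ^ (n - k))]

end ProdMoments

lemma integrable_const_mul_sq_pow_gaussianReal (μ : ℝ) (v : ℝ≥0) (c : ℝ) (k : ℕ) :
    Integrable (fun x ↦ (c * x ^ 2) ^ k) (gaussianReal μ v) := by
  simpa only [mul_pow, ← pow_mul] using (integrable_pow_gaussianReal μ v (2 * k)).const_mul (c ^ k)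

lemma integral_const_mul_sq_pow_gaussianReal (v : ℝ≥0) (c : ℝ) (k : ℕ) :
    ∫ x, (c * x ^ 2) ^ k ∂gaussianReal 0 v = c ^ k * v ^ k * (2 * k - 1 : ℕ)‼ := by
  simp_rw [mul_pow, ← pow_mul]
  rw [integral_const_mul, integral_pow_two_mul_gaussianReal, mul_assoc]

instance isProbabilityMeasure_gauss2 : IsProbabilityMeasure gauss2 := by
  unfold gauss2
  infer_instance

instance isProbabilityMeasure_gauss3 : IsProbabilityMeasure gauss3 := by
  unfold gauss3
  infer_instance

lemma integrable_sq_add_sq_pow_gauss2 (n : ℕ) :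
    Integrable (fun p : ℝ × ℝ ↦ (p.1 ^ 2 + p.2 ^ 2) ^ n) gauss2 := by
  simpa only [one_mul, gauss2] using
    integrable_add_pow_prod (integrable_const_mul_sq_pow_gaussianReal 0 1 1)
      (integrable_const_mul_sq_pow_gaussianReal 0 1 1) n

lemma integral_sq_add_sq_pow_gauss2 (n : ℕ) :
    ∫ p, (p.1 ^ 2 + p.2 ^ 2) ^ n ∂gauss2 =
      ∑ k ∈ range (n + 1), ((2 * k - 1 : ℕ)‼ * (2 * (n - k) - 1 : ℕ)‼ * n.choose k : ℝ) := by
  have h := integral_add_pow_prod (integrable_const_mul_sq_pow_gaussianReal 0 1 1)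
    (integrable_const_mul_sq_pow_gaussianReal 0 1 1) n
  simp only [integral_const_mul_sq_pow_gaussianReal] at h
  simpa only [one_mul, one_pow, NNReal.coe_one, gauss2] using h

lemma chiComb_eq (q : ℝ × ℝ × ℝ) :
    chiComb q = (-2 * q.1 ^ 2 + (q.2.1 ^ 2 + q.2.2 ^ 2)) / √12 := by
  rw [chiComb]
  ring

lemma integrable_chiComb_pow (n : ℕ) : Integrable (fun q ↦ chiComb q ^ n) gauss3 := by
  simp_rw [chiComb_eq, div_pow]
  exact (integrable_add_pow_prod (integrable_const_mul_sq_pow_gaussianReal 0 1 (-2))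
    integrable_sq_add_sq_pow_gauss2 n).div_const _

lemma integral_chiComb_pow (n : ℕ) :
    ∫ q, chiComb q ^ n ∂gauss3 = (∑ k ∈ range (n + 1),
      (-2) ^ k * (2 * k - 1 : ℕ)‼ * (∫ p, (p.1 ^ 2 + p.2 ^ 2) ^ (n - k) ∂gauss2) * n.choose k) /
        √12 ^ n := by
  have h := integral_add_pow_prod (integrable_const_mul_sq_pow_gaussianReal 0 1 (-2))
    integrable_sq_add_sq_pow_gauss2 n
  simp only [integral_const_mul_sq_pow_gaussianReal, NNReal.coe_one, one_pow, mul_one] at h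
  simp_rw [chiComb_eq, div_pow]
  rw [integral_div]
  exact congrArg (· / √12 ^ n) h

lemma integral_chiComb_pow_two_mul (m : ℕ) :
    ∫ q, chiComb q ^ (2 * m) ∂gauss3 = (∑ k ∈ range (2 * m + 1),
      (-2) ^ k * (2 * k - 1 : ℕ)‼ * (∫ p, (p.1 ^ 2 + p.2 ^ 2) ^ (2 * m - k) ∂gauss2) *
        (2 * m).choose k) / 12 ^ m := by
  rw [integral_chiComb_pow, pow_mul, Real.sq_sqrt (by norm_num)]

lemma integral_chiComb : ∫ q, chiComb q ∂gauss3 = 0 := by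
  have h := integral_chiComb_pow 1
  norm_num [sum_range_succ, integral_sq_add_sq_pow_gauss2] at h
  exact h

lemma integral_chiComb_sq : ∫ q, chiComb q ^ 2 ∂gauss3 = 1 := by
  have h := integral_chiComb_pow_two_mul 1
  norm_num [sum_range_succ, integral_sq_add_sq_pow_gauss2, Nat.choose, Nat.doubleFactorial] at h
  exact h

lemma integral_chiComb_pow_four : ∫ q, chiComb q ^ 4 ∂gauss3 = 9 := by
  have h := integral_chiComb_pow_two_mul 2
  norm_num [sum_range_succ, integral_sq_add_sq_pow_gauss2, Nat.choose, Nat.doubleFactorial] at h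
  exact h

lemma integral_chiComb_pow_six : ∫ q, chiComb q ^ 6 ∂gauss3 = 265 := by
  have h := integral_chiComb_pow_two_mul 3
  norm_num [sum_range_succ, integral_sq_add_sq_pow_gauss2, Nat.choose, Nat.doubleFactorial] at h
  exact h

lemma integral_chiComb_pow_eight : ∫ q, chiComb q ^ 8 ∂gauss3 = 16625 := by
  have h := integral_chiComb_pow_two_mul 4
  norm_num [sum_range_succ, integral_sq_add_sq_pow_gauss2, Nat.choose, Nat.doubleFactorial] at h
  exact h

lemma integral_mul_pow_gauss2 (n : ℕ) :
    ∫ p, (p.1 * p.2) ^ n ∂gauss2 = (∫ x, x ^ n ∂gaussianReal 0 1) ^ 2 := by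
  simp_rw [mul_pow]
  rw [gauss2, integral_prod_mul (fun x ↦ x ^ n) (fun x ↦ x ^ n), sq]

lemma map_chiComb_ne_map_mul :
    gauss3.map chiComb ≠ gauss2.map (fun p : ℝ × ℝ ↦ p.1 * p.2) := by
  intro h
  have h6 := (IdentDistrib.mk (by unfold chiComb; fun_prop) (by fun_prop) h).comp
    (measurable_id.pow_const 6) |>.integral_eq
  have h225 := integral_mul_pow_gauss2 6
  rw [show 6 = 2 * 3 from rfl, integral_pow_two_mul_gaussianReal] at h225
  norm_num [Function.comp_def, integral_chiComb_pow_six, h225] at h6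

/-- F = (N₁² + N₂² - 2N₋₁²)/√12 satisfies E[F] = 0, E[F²] = 1, E[P₄(F)] = 0 and
E[P₈(F)] = 0 (with P₄(x) = x⁴ - 14x² + 5, P₈(x) = x⁸ - 140x⁶ + 3486x⁴ - 12284x² + 1385),
yet F is not distributed as the product of two independent standard Gaussians: its sixth
moment differs from 225. -/
theorem chiComb_matches_P4_P8_but_not_normal_product :
    (∫ q, chiComb q ∂gauss3 = 0) ∧
    (∫ q, chiComb q ^ 2 ∂gauss3 = 1) ∧
    (∫ q, (chiComb q ^ 4 - 14 * chiComb q ^ 2 + 5) ∂gauss3 = 0) ∧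
    (∫ q, (chiComb q ^ 8 - 140 * chiComb q ^ 6 + 3486 * chiComb q ^ 4
        - 12284 * chiComb q ^ 2 + 1385) ∂gauss3 = 0) ∧
    (Measure.map chiComb gauss3 ≠ Measure.map (fun p : ℝ × ℝ => p.1 * p.2) gauss2) ∧
    (∫ q, chiComb q ^ 6 ∂gauss3 ≠ 225) := by
  -- `fun_prop` discharges the integrability side goals of linearity from this hypothesis
  have integrable_pow := integrable_chiComb_pow
  refine ⟨integral_chiComb, integral_chiComb_sq, ?_, ?_, map_chiComb_ne_map_mul, ?_⟩
  · rw [integral_add, integral_sub, integral_const_mul, integral_chiComb_pow_four,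
      integral_chiComb_sq, integral_const] <;> first | fun_prop | norm_num
  · rw [integral_add, integral_sub, integral_add, integral_sub, integral_const_mul,
      integral_const_mul, integral_const_mul, integral_chiComb_pow_eight,
      integral_chiComb_pow_six, integral_chiComb_pow_four, integral_chiComb_sq,
      integral_const] <;> first | fun_prop | norm_num
  · rw [integral_chiComb_pow_six]
    norm_num
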